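/- With the notation of the previous statement, the assignment f ↦ F_f is anti-multiplicative: F_{f₁ ∗ f₂} = F_{f₂} ∘ F_{f₁} for all convolution-invertible equivariant maps f₁, f₂ : H → P (equivalently, it is a group homomorphism onto the group of such B-module automorphisms with the opposite composition as product). -/
import Mathlib

set_option maxHeartbeats 1000000
set_option synthInstance.maxHeartbeats 400000
set_option linter.unusedVariables false


open TensorProduct

noncomputable section

variable {H P : Type*} [Ring H] [HopfAlgebra ℂ H] [Ring P] [Algebra ℂ P]

/-- The right adjoint coaction `Ad(g) = g⁽²⁾ ⊗ S(g⁽¹⁾)·g⁽³⁾`. -/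
def adjointCoaction : H →ₗ[ℂ] H ⊗[ℂ] H :=
  (TensorProduct.map LinearMap.id (LinearMap.mul' ℂ H))
    ∘ₗ (TensorProduct.assoc ℂ H H H).toLinearMap
    ∘ₗ (TensorProduct.map
          ((TensorProduct.comm ℂ H H).toLinearMap ∘ₗ
            TensorProduct.map (HopfAlgebra.antipode (R := ℂ)) LinearMap.id)
          LinearMap.id)
    ∘ₗ (TensorProduct.map (Coalgebra.comul (R := ℂ)) LinearMap.id)
    ∘ₗ Coalgebra.comul (R := ℂ)

/-- Convolution product of linear maps `H → P`: `(f₁ ∗ f₂)(g) = f₁(g⁽¹⁾)f₂(g⁽²⁾)`. -/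
def conv (f₁ f₂ : H →ₗ[ℂ] P) : H →ₗ[ℂ] P :=
  LinearMap.mul' ℂ P ∘ₗ TensorProduct.map f₁ f₂ ∘ₗ Coalgebra.comul (R := ℂ)

/-- The convolution unit `1·ε`. -/
def convUnit : H →ₗ[ℂ] P :=
  Algebra.linearMap ℂ P ∘ₗ Coalgebra.counit (R := ℂ)

/-- `F_f := m_P ∘ (id_P ⊗ f) ∘ Δ_P`, i.e. `F_f(x) = x⁽⁰⁾ f(x⁽¹⁾)`. -/
def Ff (ΔP : P →ₗ[ℂ] P ⊗[ℂ] H) (f : H →ₗ[ℂ] P) : P →ₗ[ℂ] P :=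
  LinearMap.mul' ℂ P ∘ₗ TensorProduct.map LinearMap.id f ∘ₗ ΔP

/-- `φ((c⊗d)⊗e) = d ⊗ S(c)·e`. -/
def auxφ : (H ⊗[ℂ] H) ⊗[ℂ] H →ₗ[ℂ] H ⊗[ℂ] H :=
  (TensorProduct.map LinearMap.id (LinearMap.mul' ℂ H))
    ∘ₗ (TensorProduct.assoc ℂ H H H).toLinearMap
    ∘ₗ (TensorProduct.map
          ((TensorProduct.comm ℂ H H).toLinearMap ∘ₗ
            TensorProduct.map (HopfAlgebra.antipode (R := ℂ)) LinearMap.id)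
          LinearMap.id)

lemma auxφ_tmul (c d e : H) :
    auxφ ((c ⊗ₜ[ℂ] d) ⊗ₜ[ℂ] e) = d ⊗ₜ[ℂ] (HopfAlgebra.antipode (R := ℂ) c * e) := by
  simp [auxφ, LinearMap.mul'_apply]

lemma adjointCoaction_eq (g : H) :
    adjointCoaction g = auxφ ((TensorProduct.map (Coalgebra.comul (R := ℂ)) LinearMap.id)
      (Coalgebra.comul (R := ℂ) g)) := rfl

/-- `gAll (y ⊗ b) = (f₁ ⊗ id)(φ(Δy ⊗ b))`, so that `(f₁ ⊗ id)∘Ad = gAll ∘ Δ`. -/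
def gAll (f₁ : H →ₗ[ℂ] P) : H ⊗[ℂ] H →ₗ[ℂ] P ⊗[ℂ] H :=
  (TensorProduct.map f₁ LinearMap.id) ∘ₗ auxφ
    ∘ₗ (TensorProduct.map (Coalgebra.comul (R := ℂ)) LinearMap.id)

lemma gAll_comul (f₁ : H →ₗ[ℂ] P) (b : H) :
    gAll f₁ (Coalgebra.comul (R := ℂ) b) =
      (TensorProduct.map f₁ LinearMap.id) (adjointCoaction b) := rfl

/-- `Ψ f₁ f₂ p (a ⊗ v) = m((id⊗f₂)((p⊗a)·(gAll f₁ v)))`. -/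
def Ψ (f₁ f₂ : H →ₗ[ℂ] P) (p : P) : H ⊗[ℂ] (H ⊗[ℂ] H) →ₗ[ℂ] P :=
  LinearMap.mul' ℂ P ∘ₗ (TensorProduct.map LinearMap.id f₂)
    ∘ₗ LinearMap.mul' ℂ (P ⊗[ℂ] H)
    ∘ₗ TensorProduct.map (TensorProduct.mk ℂ P H p) (gAll f₁)

/-- `Ω f₁ f₂ p b (x ⊗ v) = m((id⊗f₂)((p⊗x)·(f₁⊗id)(φ(v ⊗ b))))`. -/
def Ω (f₁ f₂ : H →ₗ[ℂ] P) (p : P) (b : H) : H ⊗[ℂ] (H ⊗[ℂ] H) →ₗ[ℂ] P :=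
  LinearMap.mul' ℂ P ∘ₗ (TensorProduct.map LinearMap.id f₂)
    ∘ₗ LinearMap.mul' ℂ (P ⊗[ℂ] H)
    ∘ₗ TensorProduct.map (TensorProduct.mk ℂ P H p)
        ((TensorProduct.map f₁ LinearMap.id) ∘ₗ auxφ ∘ₗ (TensorProduct.mk ℂ (H ⊗[ℂ] H) H).flip b)

lemma Ψ_tmul (f₁ f₂ : H →ₗ[ℂ] P) (p : P) (a : H) (v : H ⊗[ℂ] H) :
    Ψ f₁ f₂ p (a ⊗ₜ[ℂ] v) =
      LinearMap.mul' ℂ P ((TensorProduct.map LinearMap.id f₂)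
        ((p ⊗ₜ[ℂ] a) * gAll f₁ v)) := by
  simp [Ψ, LinearMap.mul'_apply]

lemma Ω_tmul (f₁ f₂ : H →ₗ[ℂ] P) (p : P) (b : H) (x c d : H) :
    Ω f₁ f₂ p b (x ⊗ₜ[ℂ] (c ⊗ₜ[ℂ] d)) =
      p * (f₁ d * f₂ (x * (HopfAlgebra.antipode (R := ℂ) c * b))) := by
  simp [Ω, LinearMap.mul'_apply, auxφ_tmul, Algebra.TensorProduct.tmul_mul_tmul, mul_assoc]

lemma crux (f₁ f₂ : H →ₗ[ℂ] P) (p : P) (h : H) :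
    LinearMap.mul' ℂ P ((TensorProduct.map LinearMap.id f₂)
      (LinearMap.mul' ℂ (P ⊗[ℂ] H)
        ((TensorProduct.map LinearMap.id
            ((TensorProduct.map f₁ LinearMap.id) ∘ₗ adjointCoaction))
          ((TensorProduct.assoc ℂ P H H).symm
            (p ⊗ₜ[ℂ] Coalgebra.comul (R := ℂ) h))))) =
    p * conv f₁ f₂ h := by
  -- Step 0: rewrite the LHS through Ψ
  have e0 : ∀ s : H ⊗[ℂ] H,
      LinearMap.mul' ℂ P ((TensorProduct.map LinearMap.id f₂)
        (LinearMap.mul' ℂ (P ⊗[ℂ] H)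
          ((TensorProduct.map LinearMap.id
              ((TensorProduct.map f₁ LinearMap.id) ∘ₗ adjointCoaction))
            ((TensorProduct.assoc ℂ P H H).symm (p ⊗ₜ[ℂ] s))))) =
      Ψ f₁ f₂ p ((LinearMap.lTensor H (Coalgebra.comul (R := ℂ))) s) := by
    intro s
    induction s using TensorProduct.induction_on with
    | zero => simp only [tmul_zero, map_zero]
    | tmul a b =>
        simp only [TensorProduct.assoc_symm_tmul, TensorProduct.map_tmul,
          LinearMap.id_coe, id_eq, LinearMap.comp_apply, LinearMap.mul'_apply,
          LinearMap.lTensor_tmul, Ψ_tmul, gAll_comul]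
    | add u v hu hv => simp only [tmul_add, map_add, hu, hv]
  -- Step i0 : Ψ ∘ assoc of (s ⊗ b) vs Ω of lTensor comul s
  have i0 : ∀ (b : H) (s : H ⊗[ℂ] H),
      Ψ f₁ f₂ p ((TensorProduct.assoc ℂ H H H) (s ⊗ₜ[ℂ] b)) =
      Ω f₁ f₂ p b ((LinearMap.lTensor H (Coalgebra.comul (R := ℂ))) s) := by
    intro b s
    induction s using TensorProduct.induction_on with
    | zero => simp only [zero_tmul, map_zero]
    | tmul x y =>
        simp only [TensorProduct.assoc_tmul, LinearMap.lTensor_tmul]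
        simp [Ψ, Ω, gAll, TensorProduct.mk_apply, LinearMap.mul'_apply]
    | add u v hu hv => simp only [add_tmul, map_add, hu, hv]
  -- antipode collapse, with a tail
  have hθ : ∀ (x b : H),
      f₂ ((LinearMap.mul' ℂ H
        ((LinearMap.lTensor H (HopfAlgebra.antipode (R := ℂ)))
          (Coalgebra.comul x))) * b) = Coalgebra.counit (R := ℂ) x • f₂ b := by
    intro x b
    rw [HopfAlgebra.mul_antipode_lTensor_comul_apply, ← Algebra.smul_def, map_smul]
  have i1half : ∀ (b y : H) (s : H ⊗[ℂ] H),
      Ω f₁ f₂ p b ((TensorProduct.assoc ℂ H H H) (s ⊗ₜ[ℂ] y)) =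
      p * (f₁ y * f₂ ((LinearMap.mul' ℂ H
        ((LinearMap.lTensor H (HopfAlgebra.antipode (R := ℂ))) s)) * b)) := by
    intro b y s
    induction s using TensorProduct.induction_on with
    | zero => simp only [zero_tmul, map_zero, mul_zero, zero_mul]
    | tmul c d =>
        simp only [TensorProduct.assoc_tmul, LinearMap.lTensor_tmul,
          LinearMap.mul'_apply, Ω_tmul, mul_assoc]
    | add u v hu hv =>
        simp only [add_tmul, map_add, hu, hv, add_mul, mul_add]
  have inner : ∀ (a b : H),
      Ω f₁ f₂ p b ((LinearMap.lTensor H (Coalgebra.comul (R := ℂ)))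
        (Coalgebra.comul (R := ℂ) a)) = p * (f₁ a * f₂ b) := by
    intro a b
    rw [← Coalgebra.coassoc_apply a]
    have key : ∀ t : H ⊗[ℂ] H,
        Ω f₁ f₂ p b ((TensorProduct.assoc ℂ H H H)
          ((LinearMap.rTensor H (Coalgebra.comul (R := ℂ))) t)) =
        p * (f₁ ((TensorProduct.lid ℂ H)
          ((LinearMap.rTensor H (Coalgebra.counit (R := ℂ))) t)) * f₂ b) := by
      intro t
      induction t using TensorProduct.induction_on with
      | zero => simp only [zero_tmul, map_zero, mul_zero, zero_mul]
      | tmul x y =>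
          rw [LinearMap.rTensor_tmul, i1half, hθ, LinearMap.rTensor_tmul]
          simp [TensorProduct.lid_tmul, mul_smul_comm, smul_mul_assoc]
      | add u v hu hv => simp only [map_add, hu, hv, mul_add, add_mul, map_add]
    rw [key (Coalgebra.comul a), Coalgebra.rTensor_counit_comul]
    simp
  -- assemble
  rw [e0 (Coalgebra.comul h), ← Coalgebra.coassoc_apply h]
  have e3 : ∀ t : H ⊗[ℂ] H,
      Ψ f₁ f₂ p ((TensorProduct.assoc ℂ H H H)
        ((LinearMap.rTensor H (Coalgebra.comul (R := ℂ))) t)) =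
      p * (LinearMap.mul' ℂ P ((TensorProduct.map f₁ f₂) t)) := by
    intro t
    induction t using TensorProduct.induction_on with
    | zero => simp only [map_zero, mul_zero]
    | tmul a b =>
        rw [LinearMap.rTensor_tmul, i0, inner]
        simp [LinearMap.mul'_apply]
    | add u v hu hv => simp only [map_add, hu, hv, mul_add]
  rw [e3 (Coalgebra.comul h)]
  rfl

/-- the assignment `f ↦ F_f` is anti-multiplicative on convolution-
invertible equivariant maps: `F_{f₁ ∗ f₂} = F_{f₂} ∘ F_{f₁}`. -/
theorem Ff_antimul
    (ΔP : P →ₗ[ℂ] P ⊗[ℂ] H)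
    (hPmul : ∀ x y : P, ΔP (x * y) = ΔP x * ΔP y) (hPone : ΔP 1 = 1)
    (hcounit : ∀ x : P,
      (TensorProduct.rid ℂ P)
        ((TensorProduct.map LinearMap.id (Coalgebra.counit (R := ℂ))) (ΔP x)) = x)
    (hcoassoc : ∀ x : P,
      (TensorProduct.assoc ℂ P H H)
        ((TensorProduct.map ΔP LinearMap.id) (ΔP x)) =
      (TensorProduct.map LinearMap.id (Coalgebra.comul (R := ℂ))) (ΔP x))
    (f₁ f₂ : H →ₗ[ℂ] P) (hf₁1 : f₁ 1 = 1) (hf₂1 : f₂ 1 = 1)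
    (hequiv₁ : ∀ g : H, (TensorProduct.map f₁ LinearMap.id) (adjointCoaction g) =
      ΔP (f₁ g))
    (hequiv₂ : ∀ g : H, (TensorProduct.map f₂ LinearMap.id) (adjointCoaction g) =
      ΔP (f₂ g))
    (hinv₁ : ∃ finv : H →ₗ[ℂ] P, conv f₁ finv = convUnit ∧ conv finv f₁ = convUnit)
    (hinv₂ : ∃ finv : H →ₗ[ℂ] P, conv f₂ finv = convUnit ∧ conv finv f₂ = convUnit) :
    Ff ΔP (conv f₁ f₂) = Ff ΔP f₂ ∘ₗ Ff ΔP f₁ := by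
  -- proof
  apply LinearMap.ext
  intro x
  -- unfold both sides
  show LinearMap.mul' ℂ P ((TensorProduct.map LinearMap.id (conv f₁ f₂)) (ΔP x)) =
    LinearMap.mul' ℂ P ((TensorProduct.map LinearMap.id f₂)
      (ΔP (LinearMap.mul' ℂ P ((TensorProduct.map LinearMap.id f₁) (ΔP x)))))
  -- Step A : ΔP is multiplicative and f₁ is equivariant
  have hA : ∀ t : P ⊗[ℂ] H,
      ΔP (LinearMap.mul' ℂ P ((TensorProduct.map LinearMap.id f₁) t)) =
      LinearMap.mul' ℂ (P ⊗[ℂ] H)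
        ((TensorProduct.map ΔP
          ((TensorProduct.map f₁ LinearMap.id) ∘ₗ adjointCoaction)) t) := by
    intro t
    induction t using TensorProduct.induction_on with
    | zero => simp only [map_zero]
    | tmul q g =>
        simp only [TensorProduct.map_tmul, LinearMap.id_coe, id_eq,
          LinearMap.mul'_apply, LinearMap.comp_apply, hequiv₁, hPmul]
    | add u v hu hv => simp only [map_add, hu, hv]
  rw [hA (ΔP x)]
  -- split the map on the left factor and use coassociativity of the coaction
  have hsplit : (TensorProduct.map ΔP
      ((TensorProduct.map f₁ LinearMap.id) ∘ₗ adjointCoaction)) (ΔP x) =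
      (TensorProduct.map LinearMap.id
        ((TensorProduct.map f₁ LinearMap.id) ∘ₗ adjointCoaction))
      ((TensorProduct.assoc ℂ P H H).symm
        ((TensorProduct.map LinearMap.id (Coalgebra.comul (R := ℂ))) (ΔP x))) := by
    have h1 : (TensorProduct.map ΔP LinearMap.id) (ΔP x) =
        (TensorProduct.assoc ℂ P H H).symm
          ((TensorProduct.map LinearMap.id (Coalgebra.comul (R := ℂ))) (ΔP x)) := by
      rw [LinearEquiv.eq_symm_apply]
      exact hcoassoc x
    calc (TensorProduct.map ΔP
        ((TensorProduct.map f₁ LinearMap.id) ∘ₗ adjointCoaction)) (ΔP x)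
        = ((TensorProduct.map LinearMap.id
              ((TensorProduct.map f₁ LinearMap.id) ∘ₗ adjointCoaction)) ∘ₗ
           (TensorProduct.map ΔP LinearMap.id)) (ΔP x) := by
          rw [← TensorProduct.map_comp, LinearMap.id_comp, LinearMap.comp_id]
      _ = _ := by rw [LinearMap.comp_apply, h1]
  rw [hsplit]
  -- final identity, linear in `t`
  have hC : ∀ t : P ⊗[ℂ] H,
      LinearMap.mul' ℂ P ((TensorProduct.map LinearMap.id f₂)
        (LinearMap.mul' ℂ (P ⊗[ℂ] H)
          ((TensorProduct.map LinearMap.id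
              ((TensorProduct.map f₁ LinearMap.id) ∘ₗ adjointCoaction))
            ((TensorProduct.assoc ℂ P H H).symm
              ((TensorProduct.map LinearMap.id (Coalgebra.comul (R := ℂ))) t))))) =
      LinearMap.mul' ℂ P ((TensorProduct.map LinearMap.id (conv f₁ f₂)) t) := by
    intro t
    induction t using TensorProduct.induction_on with
    | zero => simp only [map_zero]
    | tmul q g =>
        have := crux f₁ f₂ q g
        simp only [TensorProduct.map_tmul, LinearMap.id_coe, id_eq] at this ⊢
        rw [this, LinearMap.mul'_apply]
    | add u v hu hv => simp only [map_add, hu, hv]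
  rw [hC (ΔP x)]

end
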